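/- Let A be a noetherian domain and B a finite flat A-algebra which is Gorenstein over A (B^∨ = Hom_A(B,A) is flat of rank 1 over B), with B locally free over A. Suppose β : M × N → A is an A-bilinear, B-equivariant, non-degenerate pairing where M, N are B-modules finite flat over A and flat of rank 1 over B. Then the ideal L_β = image(β_B on (M ⊗_A B)[I] × (N ⊗_A B)[I]) equals the Noether different d(B/A) = mult((B ⊗_A B)[I]). -/

import Mathlib

/-!
Transport along the `B`-linear isomorphisms `M ≅ B ≅ N` turns `β` into a perfect pairing `P` on
`B` with `P (b x) y = P x (b y)`, i.e. `P x y = τ (x y)` for `τ = P 1`. Since `B` is finite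
projective over `A`, `P` has dual bases `(eᵢ)`, `(fᵢ)`. The Casimir element `Δ = ∑ eᵢ ⊗ fᵢ` is
`I`-torsion, and every `I`-torsion element of `B ⊗_A B` is `Δ (1 ⊗ g)`. So both ideals are
principal, generated by `δ = ∑ eᵢ fᵢ`: the multiplication sends `Δ (1 ⊗ g)` to `δ g`, and `β_B`
sends the pair `Δ (1 ⊗ g)`, `Δ (1 ⊗ g')` to `δ g g'`.
-/

open TensorProduct

section

variable (A B M N : Type*) [CommRing A] [CommRing B] [Algebra A B]
  [AddCommGroup M] [Module A M] [Module B M] [IsScalarTower A B M]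
  [AddCommGroup N] [Module A N] [Module B N] [IsScalarTower A B N]

/-- Scalar multiplication by `b ∈ B` on a `B`-module, as an `A`-linear map. -/
def smulMap (b : B) : M →ₗ[A] M := (LinearMap.lsmul B M b).restrictScalars A

/-- The `B`-module structure on `B^∨ = Hom_A(B, A)`: `(b • ψ)(x) = ψ(b x)`. -/
def dualSmulHom (b : B) : Module.Dual A B →ₗ[A] Module.Dual A B :=
  ((LinearMap.lsmul B B b).restrictScalars A).dualMap

/-- The `I`-torsion subset of `M ⊗_A B`, for `I = ker(B ⊗_A B → B)`. -/
def torsSet : Set (M ⊗[A] B) :=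
  {x | ∀ b' : B, TensorProduct.map (smulMap A B M b') LinearMap.id x
    = TensorProduct.map LinearMap.id (LinearMap.mulLeft A b') x}

/-- The base change `β_B` of `β : M × N → A` to `B`, packaged on the tensor product. -/
noncomputable def betaB (β : M →ₗ[A] N →ₗ[A] A) :
    (M ⊗[A] B) ⊗[A] (N ⊗[A] B) →ₗ[A] B :=
  (TensorProduct.lid A B).toLinearMap ∘ₗ
    TensorProduct.map (TensorProduct.lift β) (LinearMap.mul' A B) ∘ₗ
    (TensorProduct.tensorTensorTensorComm A M B N B).toLinearMap

end

theorem Ideal.span_eq_span_singleton_of_mem_of_forall_dvd {R : Type*} [CommSemiring R]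
    {s : Set R} {δ : R} (hδ : δ ∈ s) (hs : ∀ r ∈ s, δ ∣ r) :
    Ideal.span s = Ideal.span {δ} :=
  le_antisymm (Ideal.span_le.mpr fun r hr => Ideal.mem_span_singleton.mpr (hs r hr))
    (Ideal.span_mono (Set.singleton_subset_iff.mpr hδ))

section Torsion

variable {A B : Type*} [CommRing A] [CommRing B] [Algebra A B]

theorem map_smulMap_id_eq_tmul_one_mul (b : B) (z : B ⊗[A] B) :
    map (smulMap A B B b) LinearMap.id z = (b ⊗ₜ[A] 1) * z := by
  induction z using TensorProduct.induction_on with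
  | zero => simp
  | tmul x y => simp [smulMap]
  | add x y hx hy => simp only [map_add, hx, hy, mul_add]

theorem map_id_mulLeft_eq_one_tmul_mul (b : B) (z : B ⊗[A] B) :
    map LinearMap.id (LinearMap.mulLeft A b) z = (1 ⊗ₜ[A] b) * z := by
  induction z using TensorProduct.induction_on with
  | zero => simp
  | tmul x y => simp
  | add x y hx hy => simp only [map_add, hx, hy, mul_add]

theorem mem_torsSet_self_iff {z : B ⊗[A] B} :
    z ∈ torsSet A B B ↔ ∀ b : B, (b ⊗ₜ[A] 1) * z = (1 ⊗ₜ[A] b) * z := by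
  simp only [torsSet, Set.mem_ofPred_eq, map_smulMap_id_eq_tmul_one_mul,
    map_id_mulLeft_eq_one_tmul_mul]

variable {M M' : Type*} [AddCommGroup M] [Module A M] [Module B M] [IsScalarTower A B M]
  [AddCommGroup M'] [Module A M'] [Module B M'] [IsScalarTower A B M']

theorem rTensor_mem_torsSet_iff (e : M ≃ₗ[A] M') (he : ∀ (b : B) (m : M), e (b • m) = b • e m)
    (x : M ⊗[A] B) : e.rTensor B x ∈ torsSet A B M' ↔ x ∈ torsSet A B M := by
  have hsmul : ∀ (b : B) (x : M ⊗[A] B), e.rTensor B (map (smulMap A B M b) LinearMap.id x) =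
      map (smulMap A B M' b) LinearMap.id (e.rTensor B x) := fun b x => by
    induction x using TensorProduct.induction_on with
    | zero => simp
    | tmul m c => simp [smulMap, he]
    | add x y hx hy => simp only [map_add, hx, hy]
  have hmul : ∀ (b : B) (x : M ⊗[A] B),
      e.rTensor B (map LinearMap.id (LinearMap.mulLeft A b) x) =
        map LinearMap.id (LinearMap.mulLeft A b) (e.rTensor B x) := fun b x => by
    induction x using TensorProduct.induction_on with
    | zero => simp
    | tmul m c => simp
    | add x y hx hy => simp only [map_add, hx, hy]
  simp only [torsSet, Set.mem_ofPred_eq, ← hsmul, ← hmul, (e.rTensor B).injective.eq_iff]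

end Torsion

section Pairing

variable {A B : Type*} [CommRing A] [CommRing B] [Algebra A B]
  {M N M' N' : Type*} [AddCommGroup M] [Module A M] [AddCommGroup N] [Module A N]
  [AddCommGroup M'] [Module A M'] [AddCommGroup N'] [Module A N']

@[simp]
theorem betaB_tmul_tmul (β : M →ₗ[A] N →ₗ[A] A) (m : M) (b : B) (n : N) (b' : B) :
    betaB A B M N β ((m ⊗ₜ[A] b) ⊗ₜ[A] (n ⊗ₜ[A] b')) = β m n • (b * b') := by
  simp [betaB]

theorem betaB_rTensor_tmul_rTensor (eM : M ≃ₗ[A] M') (eN : N ≃ₗ[A] N')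
    {β : M →ₗ[A] N →ₗ[A] A} {β' : M' →ₗ[A] N' →ₗ[A] A}
    (hβ : ∀ m n, β' (eM m) (eN n) = β m n) (x : M ⊗[A] B) (y : N ⊗[A] B) :
    betaB A B M' N' β' (eM.rTensor B x ⊗ₜ[A] eN.rTensor B y) = betaB A B M N β (x ⊗ₜ[A] y) := by
  induction x using TensorProduct.induction_on with
  | zero => simp
  | add x x' hx hx' => simp only [map_add, add_tmul, hx, hx']
  | tmul m b =>
    induction y using TensorProduct.induction_on with
    | zero => simp
    | add y y' hy hy' => simp only [map_add, tmul_add, hy, hy']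
    | tmul n b' => simp [hβ]

variable [Module B M] [IsScalarTower A B M] [Module B N] [IsScalarTower A B N]
  [Module B M'] [IsScalarTower A B M'] [Module B N'] [IsScalarTower A B N']

theorem betaB_image_torsSet_rTensor (eM : M ≃ₗ[A] M') (eN : N ≃ₗ[A] N')
    (heM : ∀ (b : B) (m : M), eM (b • m) = b • eM m)
    (heN : ∀ (b : B) (n : N), eN (b • n) = b • eN n)
    {β : M →ₗ[A] N →ₗ[A] A} {β' : M' →ₗ[A] N' →ₗ[A] A}
    (hβ : ∀ m n, β' (eM m) (eN n) = β m n) :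
    {r : B | ∃ x ∈ torsSet A B M', ∃ y ∈ torsSet A B N', betaB A B M' N' β' (x ⊗ₜ[A] y) = r} =
      {r : B | ∃ x ∈ torsSet A B M, ∃ y ∈ torsSet A B N, betaB A B M N β (x ⊗ₜ[A] y) = r} := by
  ext r
  simp only [Set.mem_ofPred_eq, (eM.rTensor B).surjective.exists, (eN.rTensor B).surjective.exists,
    rTensor_mem_torsSet_iff _ heM, rTensor_mem_torsSet_iff _ heN,
    betaB_rTensor_tmul_rTensor eM eN hβ]

end Pairing

section DualPair

variable {A V W ι : Type*} [CommRing A] [AddCommGroup V] [Module A V] [AddCommGroup W] [Module A W]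
  [Fintype ι]

def IsDualPair (P : W →ₗ[A] V →ₗ[A] A) (e : ι → V) (f : ι → W) : Prop :=
  ∀ v, ∑ i, P (f i) v • e i = v

theorem exists_isDualPair [Module.Finite A V] [Module.Projective A V]
    {P : W →ₗ[A] Module.Dual A V} (hP : Function.Surjective P) :
    ∃ (n : ℕ) (e : Fin n → V) (f : Fin n → W), IsDualPair P e f := by
  obtain ⟨n, π, s, -, -, hπs⟩ := Module.Finite.exists_comp_eq_id_of_projective A V
  choose f hf using fun i : Fin n => hP (LinearMap.proj i ∘ₗ s)
  refine ⟨n, fun i => π fun j => if i = j then 1 else 0, f, fun v => ?_⟩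
  simp only [hf, LinearMap.comp_apply, LinearMap.proj_apply]
  rw [← LinearMap.pi_apply_eq_sum_univ, ← LinearMap.comp_apply, hπs, LinearMap.id_apply]

end DualPair

section Frobenius

variable {A B ι : Type*} [CommRing A] [CommRing B] [Algebra A B] [Fintype ι]
  {P : B →ₗ[A] B →ₗ[A] A} {e f : ι → B}

theorem pairing_comm (hP : ∀ b x y : B, P (b * x) y = P x (b * y)) (x y : B) : P x y = P y x := by
  calc P x y = P 1 (x * y) := by simpa using hP x 1 y
    _ = P 1 (y * x) := by rw [mul_comm]
    _ = P y x := by simpa using (hP y 1 x).symm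

theorem IsDualPair.swap (hP : ∀ b x y : B, P (b * x) y = P x (b * y))
    (hinj : Function.Injective P) (h : IsDualPair P e f) : IsDualPair P f e := by
  intro b
  refine hinj (LinearMap.ext fun c => ?_)
  conv_rhs => rw [pairing_comm hP, ← h c]
  simp only [map_sum, map_smul, LinearMap.sum_apply, LinearMap.smul_apply, smul_eq_mul,
    mul_comm]

variable (A) in
def casimir (e f : ι → B) : B ⊗[A] B := ∑ i, e i ⊗ₜ[A] f i

theorem casimir_mul_tmul (g : B) : casimir A e f * (1 ⊗ₜ[A] g) = ∑ i, e i ⊗ₜ[A] (f i * g) := by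
  simp [casimir, Finset.sum_mul]

theorem casimir_mem_torsSet (hP : ∀ b x y : B, P (b * x) y = P x (b * y))
    (h : IsDualPair P e f) (h' : IsDualPair P f e) : casimir A e f ∈ torsSet A B B := by
  rw [mem_torsSet_self_iff]
  intro b
  have hcoeff : ∀ i j, P (f j) (b * e i) = P (e i) (b * f j) := fun i j => by
    rw [pairing_comm hP, hP]
  calc (b ⊗ₜ[A] 1) * casimir A e f
      = ∑ i, (∑ j, P (f j) (b * e i) • e j) ⊗ₜ[A] f i := by
        simp only [casimir, Finset.mul_sum, Algebra.TensorProduct.tmul_mul_tmul, one_mul, h _]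
    _ = ∑ j, e j ⊗ₜ[A] ∑ i, P (e i) (b * f j) • f i := by
        simp only [sum_tmul, tmul_sum, ← smul_tmul, hcoeff]
        exact Finset.sum_comm
    _ = (1 ⊗ₜ[A] b) * casimir A e f := by
        simp only [casimir, Finset.mul_sum, Algebra.TensorProduct.tmul_mul_tmul, one_mul, h' _]

theorem IsDualPair.sum_tmul_lid_rTensor (hP : ∀ b x y : B, P (b * x) y = P x (b * y))
    (h : IsDualPair P e f) (z : B ⊗[A] B) :
    ∑ i, e i ⊗ₜ[A] TensorProduct.lid A B (LinearMap.rTensor B (P 1) ((f i ⊗ₜ[A] 1) * z)) = z := by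
  induction z using TensorProduct.induction_on with
  | zero => simp
  | add z z' hz hz' => simp only [mul_add, map_add, tmul_add, Finset.sum_add_distrib, hz, hz']
  | tmul x y =>
    have hP1 : ∀ i, P 1 (f i * x) = P (f i) x := fun i => by rw [← hP, mul_one]
    simp only [Algebra.TensorProduct.tmul_mul_tmul, one_mul, LinearMap.rTensor_tmul, lid_tmul, hP1,
      tmul_smul, smul_tmul']
    rw [← sum_tmul, h x]

theorem lid_rTensor_one_tmul_mul (τ : Module.Dual A B) (c : B) (z : B ⊗[A] B) :
    TensorProduct.lid A B (LinearMap.rTensor B τ ((1 ⊗ₜ[A] c) * z)) =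
      c * TensorProduct.lid A B (LinearMap.rTensor B τ z) := by
  induction z using TensorProduct.induction_on with
  | zero => simp
  | add z z' hz hz' => simp only [mul_add, map_add, hz, hz']
  | tmul x y => simp

theorem exists_eq_casimir_mul_of_mem_torsSet (hP : ∀ b x y : B, P (b * x) y = P x (b * y))
    (h : IsDualPair P e f) {z : B ⊗[A] B} (hz : z ∈ torsSet A B B) :
    ∃ g, z = casimir A e f * (1 ⊗ₜ[A] g) := by
  refine ⟨TensorProduct.lid A B (LinearMap.rTensor B (P 1) z), ?_⟩
  rw [mem_torsSet_self_iff] at hz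
  conv_lhs => rw [← h.sum_tmul_lid_rTensor hP z]
  simp only [hz, lid_rTensor_one_tmul_mul, casimir_mul_tmul]

theorem betaB_casimir_mul (h' : IsDualPair P f e) (g g' : B) :
    betaB A B B B P ((casimir A e f * (1 ⊗ₜ[A] g)) ⊗ₜ[A] (casimir A e f * (1 ⊗ₜ[A] g'))) =
      Algebra.TensorProduct.lmul' A (casimir A e f) * (g * g') := by
  simp only [casimir_mul_tmul, sum_tmul, tmul_sum, map_sum, betaB_tmul_tmul]
  simp only [casimir, map_sum, Algebra.TensorProduct.lmul'_apply_tmul, Finset.sum_mul]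
  refine Finset.sum_congr rfl fun j _ => ?_
  conv_rhs => rw [← h' (e j)]
  simp only [Finset.sum_mul, smul_mul_assoc]
  exact Finset.sum_congr rfl fun i _ => by ring_nf

theorem span_lmul'_torsSet_eq (hP : ∀ b x y : B, P (b * x) y = P x (b * y))
    (h : IsDualPair P e f) (h' : IsDualPair P f e) :
    Ideal.span {r : B | ∃ z ∈ torsSet A B B, Algebra.TensorProduct.lmul' A (S := B) z = r} =
      Ideal.span {Algebra.TensorProduct.lmul' A (casimir A e f)} := by
  refine Ideal.span_eq_span_singleton_of_mem_of_forall_dvd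
    ⟨casimir A e f, casimir_mem_torsSet hP h h', rfl⟩ ?_
  rintro _ ⟨z, hz, rfl⟩
  obtain ⟨g, rfl⟩ := exists_eq_casimir_mul_of_mem_torsSet hP h hz
  simp

theorem span_betaB_torsSet_eq (hP : ∀ b x y : B, P (b * x) y = P x (b * y))
    (h : IsDualPair P e f) (h' : IsDualPair P f e) :
    Ideal.span {r : B | ∃ x ∈ torsSet A B B, ∃ y ∈ torsSet A B B,
        betaB A B B B P (x ⊗ₜ[A] y) = r} =
      Ideal.span {Algebra.TensorProduct.lmul' A (casimir A e f)} := by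
  have hΔ := casimir_mem_torsSet hP h h'
  have hδ : betaB A B B B P (casimir A e f ⊗ₜ[A] casimir A e f) =
      Algebra.TensorProduct.lmul' A (casimir A e f) := by
    simpa [← Algebra.TensorProduct.one_def] using betaB_casimir_mul h' 1 1
  refine Ideal.span_eq_span_singleton_of_mem_of_forall_dvd ⟨_, hΔ, _, hΔ, hδ⟩ ?_
  rintro _ ⟨x, hx, y, hy, rfl⟩
  obtain ⟨g, rfl⟩ := exists_eq_casimir_mul_of_mem_torsSet hP h hx
  obtain ⟨g', rfl⟩ := exists_eq_casimir_mul_of_mem_torsSet hP h hy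
  rw [betaB_casimir_mul h']
  exact dvd_mul_right _ _

end Frobenius

theorem L_ideal_eq_noether_different_general
    (A B M N : Type*) [CommRing A] [IsNoetherianRing A]
    [CommRing B] [Algebra A B] [Module.Finite A B] [Module.Flat A B]
    [AddCommGroup M] [Module A M] [Module B M] [IsScalarTower A B M]
    [AddCommGroup N] [Module A N] [Module B N] [IsScalarTower A B N]
    (eM : ∃ e : M ≃ₗ[A] B, ∀ (b : B) (m : M), e (b • m) = b * e m)
    (eN : ∃ e : N ≃ₗ[A] B, ∀ (b : B) (n : N), e (b • n) = b * e n)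
    (β : M →ₗ[A] N →ₗ[A] A)
    (hβ : ∀ (b : B) (m : M) (n : N), β (b • m) n = β m (b • n))
    (hnd : Function.Bijective β ∧ Function.Bijective β.flip) :
    Ideal.span {r : B | ∃ x ∈ torsSet A B M, ∃ y ∈ torsSet A B N,
        betaB A B M N β (x ⊗ₜ[A] y) = r}
      = Ideal.span {r : B | ∃ z ∈ torsSet A B B,
          Algebra.TensorProduct.lmul' A (S := B) z = r} := by
  obtain ⟨eM, heM⟩ := eM
  obtain ⟨eN, heN⟩ := eN
  let P : B →ₗ[A] B →ₗ[A] A := eN.symm.dualMap.toLinearMap ∘ₗ β ∘ₗ eM.symm.toLinearMap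
  have hPbij : Function.Bijective P :=
    (eN.symm.dualMap.bijective.comp hnd.1).comp eM.symm.bijective
  have heMs : ∀ (b x : B), eM.symm (b * x) = b • eM.symm x := fun b x =>
    eM.injective (by rw [heM, eM.apply_symm_apply, eM.apply_symm_apply])
  have heNs : ∀ (b x : B), eN.symm (b * x) = b • eN.symm x := fun b x =>
    eN.injective (by rw [heN, eN.apply_symm_apply, eN.apply_symm_apply])
  have hP : ∀ b x y : B, P (b * x) y = P x (b * y) := fun b x y => by
    simp [P, heMs, heNs, hβ]
  have : Module.FinitePresentation A B := Module.finitePresentation_of_finite A B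
  have : Module.Projective A B := Module.Flat.projective_of_finitePresentation
  obtain ⟨n, e, f, hef⟩ := exists_isDualPair hPbij.2
  have hfe := hef.swap hP hPbij.1
  rw [← betaB_image_torsSet_rTensor eM eN heM heN (β' := P) (by simp [P]),
    span_betaB_torsSet_eq hP hef hfe, span_lmul'_torsSet_eq hP hef hfe]

/-- If `B` is a finite flat Gorenstein `A`-algebra over the noetherian domain `A`
(its dual `B^∨` is a rank-one `B`-module), `M` and `N` are rank-one `B`-modules finite
flat over `A`, and `β : M × N → A` is an `A`-bilinear `B`-equivariant non-degenerate
pairing, then the ideal `L_β` generated by the image of `β_B` on the `I`-torsion parts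
equals the Noether different `d(B/A)`, the image under the multiplication map of the
`I`-torsion of `B ⊗_A B`. -/
theorem L_ideal_eq_noether_different
    (A B M N : Type*) [CommRing A] [IsDomain A] [IsNoetherianRing A]
    [CommRing B] [Algebra A B] [Module.Finite A B] [Module.Flat A B]
    [AddCommGroup M] [Module A M] [Module B M] [IsScalarTower A B M]
    [Module.Finite A M] [Module.Flat A M]
    [AddCommGroup N] [Module A N] [Module B N] [IsScalarTower A B N]
    [Module.Finite A N] [Module.Flat A N]
    (hGor : ∃ e : Module.Dual A B ≃ₗ[A] B,
      ∀ (b : B) (ψ : Module.Dual A B), e (dualSmulHom A B b ψ) = b * e ψ)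
    (eM : ∃ e : M ≃ₗ[A] B, ∀ (b : B) (m : M), e (b • m) = b * e m)
    (eN : ∃ e : N ≃ₗ[A] B, ∀ (b : B) (n : N), e (b • n) = b * e n)
    (β : M →ₗ[A] N →ₗ[A] A)
    (hβ : ∀ (b : B) (m : M) (n : N), β (b • m) n = β m (b • n))
    (hnd : Function.Bijective β ∧ Function.Bijective β.flip) :
    Ideal.span {r : B | ∃ x ∈ torsSet A B M, ∃ y ∈ torsSet A B N,
        betaB A B M N β (x ⊗ₜ[A] y) = r}
      = Ideal.span {r : B | ∃ z ∈ torsSet A B B,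
          Algebra.TensorProduct.lmul' A (S := B) z = r} :=
  L_ideal_eq_noether_different_general A B M N eM eN β hβ hnd
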